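/- Let F be a field of characteristic not 2 and q a nondegenerate quadratic form over F representing 1. Then q is round (D_F(q) = G_F(q)) if and only if H_F(q) ⊆ G_F(q), where G_F(q) = {a ∈ F× : aq ≅ q} and H_F(q) = {a ∈ F× : q ⊥ (-a)q is isotropic}. -/

import Mathlib

open QuadraticMap

/-- `DSet F q` is the set of nonzero values of `F` represented by the quadratic form `q`. -/
def DSet (F : Type*) [Field F] {V : Type*} [AddCommGroup V] [Module F V]
    (q : QuadraticForm F V) : Set F :=
  {a : F | a ≠ 0 ∧ ∃ v : V, q v = a}

/-- `HSet F q` is the set of `a ∈ F×` such that `q ⊥ (-a)q` (i.e. `⟨1,-a⟩ ⊗ q`) is isotropic. -/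
def HSet (F : Type*) [Field F] {V : Type*} [AddCommGroup V] [Module F V]
    (q : QuadraticForm F V) : Set F :=
  {a : F | a ≠ 0 ∧ ¬ (QuadraticMap.prod q ((-a) • q)).Anisotropic}

/-- `GSet F q` is the group of similarity factors of `q`: those `a ∈ F×` with `aq ≅ q`. -/
def GSet (F : Type*) [Field F] {V : Type*} [AddCommGroup V] [Module F V]
    (q : QuadraticForm F V) : Set F :=
  {a : F | a ≠ 0 ∧ QuadraticMap.Equivalent (a • q) q}

/-- `q` is a group form if its set of nonzero represented values is a subgroup of `F×`. -/
def IsGroupForm (F : Type*) [Field F] {V : Type*} [AddCommGroup V] [Module F V]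
    (q : QuadraticForm F V) : Prop :=
  (1 : F) ∈ DSet F q ∧ (∀ a ∈ DSet F q, ∀ b ∈ DSet F q, a * b ∈ DSet F q) ∧
    ∀ a ∈ DSet F q, a⁻¹ ∈ DSet F q

/-- `q` is round if its value set coincides with its group of similarity factors. -/
def IsRound (F : Type*) [Field F] {V : Type*} [AddCommGroup V] [Module F V]
    (q : QuadraticForm F V) : Prop :=
  DSet F q = GSet F q

/-- Nondegeneracy of a quadratic form, via its polar form. -/
def NondegQF (F : Type*) [Field F] {V : Type*} [AddCommGroup V] [Module F V]
    (q : QuadraticForm F V) : Prop :=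
  ∀ v : V, (∀ w : V, polar q v w = 0) → v = 0

/-!
When `q` represents `1`, always `G ⊆ D ⊆ H`: an isometry `aq ≅ q` carries a vector of value `1`
to one of value `a`, and if `q(v) = a`, `q(w) = 1` then `(v, w)` is isotropic for `q ⊥ (-a)q`.
Conversely an isotropic vector `(x, y)` of `q ⊥ (-a)q` gives `q(x) = a q(y)`, so either
`a = q(x) / q(y)` is a quotient of two values, or `q` is isotropic and hence, being
nondegenerate, universal. Thus `H ⊆ D / D`, which lies in the group `G` when `D = G`.
-/

open Pointwise

theorem QuadraticMap.Equivalent.smul {R M₁ M₂ N : Type*} [CommSemiring R] [AddCommMonoid M₁]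
    [AddCommMonoid M₂] [AddCommMonoid N] [Module R M₁] [Module R M₂] [Module R N]
    {Q₁ : QuadraticMap R M₁ N} {Q₂ : QuadraticMap R M₂ N} (h : Q₁.Equivalent Q₂) (c : R) :
    (c • Q₁).Equivalent (c • Q₂) := by
  obtain ⟨f⟩ := h
  exact ⟨{ f.toLinearEquiv with map_app' := fun m => by simp [f.map_app] }⟩

section ValueSets

variable {F : Type*} [Field F] {V : Type*} [AddCommGroup V] [Module F V]
  {q : QuadraticForm F V}

theorem div_mem_GSet {a b : F} (ha : a ∈ GSet F q) (hb : b ∈ GSet F q) :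
    a / b ∈ GSet F q := by
  refine ⟨div_ne_zero ha.1 hb.1, ?_⟩
  have hb_inv : (b⁻¹ • q).Equivalent q := by
    have h := (hb.2.smul b⁻¹).symm
    rwa [smul_smul, inv_mul_cancel₀ hb.1, one_smul] at h
  rw [div_eq_inv_mul, ← smul_smul]
  exact (ha.2.smul b⁻¹).trans hb_inv

theorem GSet_subset_DSet (hone : (1 : F) ∈ DSet F q) : GSet F q ⊆ DSet F q := by
  rintro a ⟨ha, ⟨f⟩⟩
  obtain ⟨-, w, hw⟩ := hone
  exact ⟨ha, f w, by rw [f.map_app, smul_apply, hw, smul_eq_mul, mul_one]⟩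

theorem DSet_subset_HSet (hone : (1 : F) ∈ DSet F q) : DSet F q ⊆ HSet F q := by
  rintro a ⟨ha, v, rfl⟩
  obtain ⟨-, w, hw⟩ := hone
  refine ⟨ha, fun hani => ?_⟩
  have hv : v = 0 := congrArg Prod.fst <| hani (v, w) (by simp [hw])
  exact ha (by rw [hv, map_zero])

theorem exists_apply_eq_of_not_anisotropic (hq : NondegQF F q) (hiso : ¬q.Anisotropic)
    (c : F) : ∃ v, q v = c := by
  obtain ⟨u, hu, hqu⟩ := (not_anisotropic_iff_exists q).mp hiso
  obtain ⟨w, hw⟩ : ∃ w, polar q u w ≠ 0 := by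
    by_contra! h
    exact hu (hq u h)
  -- `t ↦ q (t • u + w) = q w + t * polar q u w` is affine and nonconstant.
  refine ⟨((c - q w) / polar q u w) • u + w, ?_⟩
  have hexpand : ∀ t : F, q (t • u + w) = t * t * q u + q w + t * polar q u w := fun t => by
    have hsq := q.map_smul t u
    have hpolar := polar_smul_left q t u w
    simp only [polar, smul_eq_mul] at hsq hpolar ⊢
    linear_combination hpolar + hsq
  rw [hexpand, hqu, div_mul_cancel₀ _ hw]
  ring

theorem HSet_subset_DSet_div_DSet_of_anisotropic (hani : q.Anisotropic) :
    HSet F q ⊆ DSet F q / DSet F q := by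
  rintro a ⟨ha, hiso⟩
  obtain ⟨⟨x, y⟩, hxy, hval⟩ := (not_anisotropic_iff_exists _).mp hiso
  have hx : q x = a * q y := by
    simp only [prod_apply, smul_apply, smul_eq_mul] at hval
    linear_combination hval
  have hy : q y ≠ 0 := fun hy => by
    have hy0 : y = 0 := hani.eq_zero_iff.mp hy
    have hx0 : x = 0 := hani.eq_zero_iff.mp (by rw [hx, hy, mul_zero])
    exact hxy (by rw [hx0, hy0]; rfl)
  refine ⟨q x, ⟨by rw [hx]; exact mul_ne_zero ha hy, x, rfl⟩, q y, ⟨hy, y, rfl⟩, ?_⟩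
  rw [hx]
  exact mul_div_cancel_right₀ _ hy

theorem HSet_subset_DSet_div_DSet (hq : NondegQF F q) (hone : (1 : F) ∈ DSet F q) :
    HSet F q ⊆ DSet F q / DSet F q := by
  by_cases hani : q.Anisotropic
  · exact HSet_subset_DSet_div_DSet_of_anisotropic hani
  · rintro a ⟨ha, -⟩
    exact ⟨a, ⟨ha, exists_apply_eq_of_not_anisotropic hq hani a⟩, 1, hone, div_one a⟩

end ValueSets

theorem round_iff_HSet_subset_GSet_general
    (F : Type*) [Field F]
    {V : Type*} [AddCommGroup V] [Module F V]
    (q : QuadraticForm F V) (hq : NondegQF F q)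
    (hone : (1 : F) ∈ DSet F q) :
    IsRound F q ↔ HSet F q ⊆ GSet F q := by
  constructor
  · intro (hround : DSet F q = GSet F q) a ha
    obtain ⟨b, hb, c, hc, rfl⟩ := HSet_subset_DSet_div_DSet hq hone ha
    rw [hround] at hb hc
    exact div_mem_GSet hb hc
  · intro hHG
    exact ((DSet_subset_HSet hone).trans hHG).antisymm (GSet_subset_DSet hone)

theorem round_iff_HSet_subset_GSet
    (F : Type*) [Field F] (hF : (2 : F) ≠ 0)
    {V : Type*} [AddCommGroup V] [Module F V] [FiniteDimensional F V]
    (q : QuadraticForm F V) (hq : NondegQF F q) (hpos : 0 < Module.finrank F V)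
    (hone : (1 : F) ∈ DSet F q) :
    IsRound F q ↔ HSet F q ⊆ GSet F q :=
  round_iff_HSet_subset_GSet_general F q hq hone
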